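/- Let u, w, a, b be vectors in a real inner product space with u ≠ 0, w ≠ 0, ‖a‖ = 1, ‖b‖ = 1, and suppose ‖u − a‖ ≤ η and ‖w − b‖ ≤ η for some real η ≥ 0. Then the cosine similarity of u and w differs from the inner product of a and b by at most 4η: |⟨u, w⟩/(‖u‖·‖w‖) − ⟨a, b⟩| ≤ 4η. -/

import Mathlib

open scoped RealInnerProductSpace

/-! The cosine similarity of `u` and `w` is the inner product of the normalized vectors
`‖u‖⁻¹ • u` and `‖w‖⁻¹ • w`. Normalizing at most doubles the distance to a unit vector, since
`‖‖u‖⁻¹ • u - u‖ = |1 - ‖u‖| = |‖a‖ - ‖u‖| ≤ ‖u - a‖`, and the inner product is Lipschitz near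
unit vectors: `⟪x, y⟫ - ⟪a, b⟫ = ⟪x - a, y⟫ + ⟪a, y - b⟫`. -/

section

variable {E : Type*} [NormedAddCommGroup E] [InnerProductSpace ℝ E]

theorem norm_inv_norm_smul_sub_self_le (u : E) : ‖‖u‖⁻¹ • u - u‖ ≤ |1 - ‖u‖| := by
  rcases eq_or_ne u 0 with rfl | hu
  · simp
  have hu' : ‖u‖ ≠ 0 := norm_ne_zero_iff.mpr hu
  refine le_of_eq ?_
  calc ‖‖u‖⁻¹ • u - u‖ = |‖u‖⁻¹ - 1| * ‖u‖ := by
        rw [← Real.norm_eq_abs, ← norm_smul, sub_smul, one_smul]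
    _ = |1 - ‖u‖| := by
        rw [← abs_norm u, ← abs_mul, abs_norm, sub_mul, inv_mul_cancel₀ hu', one_mul]

theorem norm_inv_norm_smul_sub_le {u a : E} (ha : ‖a‖ = 1) :
    ‖‖u‖⁻¹ • u - a‖ ≤ 2 * ‖u - a‖ := by
  have h_norm : |1 - ‖u‖| ≤ ‖u - a‖ := by
    rw [← ha, norm_sub_rev]
    exact abs_norm_sub_norm_le a u
  calc ‖‖u‖⁻¹ • u - a‖ ≤ ‖‖u‖⁻¹ • u - u‖ + ‖u - a‖ := norm_sub_le_norm_sub_add_norm_sub _ _ _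
    _ ≤ 2 * ‖u - a‖ := by linarith [norm_inv_norm_smul_sub_self_le u]

theorem abs_real_inner_sub_real_inner_le (x y a b : E) :
    |⟪x, y⟫ - ⟪a, b⟫| ≤ ‖x - a‖ * ‖y‖ + ‖a‖ * ‖y - b‖ := by
  have h_split : ⟪x, y⟫ - ⟪a, b⟫ = ⟪x - a, y⟫ + ⟪a, y - b⟫ := by
    rw [inner_sub_left, inner_sub_right]; ring
  rw [h_split]
  exact (abs_add_le _ _).trans
    (add_le_add (abs_real_inner_le_norm _ _) (abs_real_inner_le_norm _ _))

theorem real_inner_div_norm_mul_norm_eq (x y : E) :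
    ⟪x, y⟫ / (‖x‖ * ‖y‖) = ⟪‖x‖⁻¹ • x, ‖y‖⁻¹ • y⟫ := by
  rw [real_inner_smul_left, real_inner_smul_right, div_eq_mul_inv, mul_inv]
  ring

theorem norm_inv_norm_smul_le_one (x : E) : ‖‖x‖⁻¹ • x‖ ≤ 1 := by
  rcases eq_or_ne x 0 with rfl | hx
  · simp
  · exact (norm_smul_inv_norm hx).le

end

theorem stmt_9_general {E : Type*} [NormedAddCommGroup E] [InnerProductSpace ℝ E]
    (u w a b : E) (η : ℝ) (ha : ‖a‖ = 1) (hb : ‖b‖ = 1) (hua : ‖u - a‖ ≤ η) (hwb : ‖w - b‖ ≤ η) :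
    |⟪u, w⟫ / (‖u‖ * ‖w‖) - ⟪a, b⟫| ≤ 4 * η := by
  have hu' : ‖‖u‖⁻¹ • u - a‖ ≤ 2 * η := (norm_inv_norm_smul_sub_le ha).trans (by linarith)
  have hw' : ‖‖w‖⁻¹ • w - b‖ ≤ 2 * η := (norm_inv_norm_smul_sub_le hb).trans (by linarith)
  rw [real_inner_div_norm_mul_norm_eq]
  calc _ ≤ ‖‖u‖⁻¹ • u - a‖ * ‖‖w‖⁻¹ • w‖ + ‖a‖ * ‖‖w‖⁻¹ • w - b‖ :=
        abs_real_inner_sub_real_inner_le _ _ _ _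
    _ ≤ 2 * η * 1 + 1 * (2 * η) := by
        rw [ha]
        gcongr
        · exact (norm_nonneg _).trans hu'
        · exact norm_inv_norm_smul_le_one w
    _ = 4 * η := by ring

/-- Theorem 3 (quantitative): if nonzero vectors `u, w` are within distance `η` of
unit vectors `a, b` respectively, then the cosine similarity of `u` and `w` differs
from `⟨a, b⟩` by at most `4η`. -/
theorem stmt_9 {E : Type*} [NormedAddCommGroup E] [InnerProductSpace ℝ E]
    (u w a b : E) (η : ℝ) (hη : 0 ≤ η) (hu : u ≠ 0) (hw : w ≠ 0)
    (ha : ‖a‖ = 1) (hb : ‖b‖ = 1) (hua : ‖u - a‖ ≤ η) (hwb : ‖w - b‖ ≤ η) :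
    |⟪u, w⟫ / (‖u‖ * ‖w‖) - ⟪a, b⟫| ≤ 4 * η :=
  stmt_9_general u w a b η ha hb hua hwb
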